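/- arXiv:1708.08973 — 5 statements merged into one kernel-verified Lean document; each statement's English description precedes it below -/
import Mathlib

section
/- Let H₁ be nontrivial and L ≠ 0, and let γ > 0. The operator Id − γ L*L is a strict contraction (‖Id − γ L*L‖ < 1) if and only if both conditions hold: γ < 2/‖L‖², and there exists μ > 0 with μ‖f‖ ≤ ‖L f‖ for all f ∈ H₁. -/
/-!
`S = 1 - γ L†L` is self-adjoint with `re ⟪S f, f⟫ = ‖f‖² - γ ‖L f‖²`, and the norm of a
self-adjoint operator is the supremum of `|re ⟪S f, f⟫|` over unit vectors. So `‖S‖ < 1` confines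
`γ ‖L f‖²` to `[(1 - ‖S‖) ‖f‖², (1 + ‖S‖) ‖f‖²]`: the lower end is the stability estimate, and the
upper end, through the C*-identity `‖L†L‖ = ‖L‖²`, gives `γ ‖L‖² < 2`. Conversely,
`μ ‖f‖ ≤ ‖L f‖ ≤ ‖L‖ ‖f‖` bounds `|re ⟪S f, f⟫|` by `max (1 - γ μ²) (γ ‖L‖² - 1) ‖f‖²`, and both
constants are `< 1`.
-/

open ContinuousLinearMap RCLike
open scoped InnerProductSpace

namespace ContinuousLinearMap

variable {𝕜 E F : Type*} [RCLike 𝕜] [NormedAddCommGroup E] [InnerProductSpace 𝕜 E]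
  [NormedAddCommGroup F] [InnerProductSpace 𝕜 F]

theorem abs_re_inner_self_le (T : E →L[𝕜] E) (x : E) : |re ⟪T x, x⟫_𝕜| ≤ ‖T‖ * ‖x‖ ^ 2 :=
  calc |re ⟪T x, x⟫_𝕜| ≤ ‖T x‖ * ‖x‖ := (abs_re_le_norm _).trans (norm_inner_le_norm _ _)
    _ ≤ ‖T‖ * ‖x‖ * ‖x‖ := by gcongr; exact T.le_opNorm x
    _ = ‖T‖ * ‖x‖ ^ 2 := by ring

theorem opNorm_le_of_abs_re_inner_self_le {T : E →L[𝕜] E} (hT : T.IsSymmetric) {k : ℝ}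
    (hk : 0 ≤ k) (h : ∀ x, |re ⟪T x, x⟫_𝕜| ≤ k * ‖x‖ ^ 2) : ‖T‖ ≤ k := by
  rw [T.norm_eq_iSup_rayleighQuotient hT]
  refine ciSup_le fun x => ?_
  rcases eq_or_ne x 0 with rfl | hx
  · simpa using hk
  rw [rayleighQuotient, reApplyInnerSelf_apply, abs_div, abs_sq, div_le_iff₀ (by positivity)]
  exact h x

theorem exists_pos_mul_norm_le_of_mul_sq_le (A : E →L[𝕜] F) {c : ℝ} (hc : 0 < c)
    (h : ∀ x, c * ‖x‖ ^ 2 ≤ ‖A x‖ ^ 2) : ∃ μ : ℝ, 0 < μ ∧ ∀ x, μ * ‖x‖ ≤ ‖A x‖ := by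
  refine ⟨√c, Real.sqrt_pos.mpr hc, fun x => ?_⟩
  calc √c * ‖x‖ = √(c * ‖x‖ ^ 2) := by rw [Real.sqrt_mul hc.le, Real.sqrt_sq (norm_nonneg x)]
    _ ≤ √(‖A x‖ ^ 2) := Real.sqrt_le_sqrt (h x)
    _ = ‖A x‖ := Real.sqrt_sq (norm_nonneg _)

section Complex

variable {H₁ H₂ : Type*} [NormedAddCommGroup H₁] [InnerProductSpace ℂ H₁] [CompleteSpace H₁]
  [NormedAddCommGroup H₂] [InnerProductSpace ℂ H₂] [CompleteSpace H₂]

theorem re_inner_one_sub_smul_adjoint_comp_self_apply (A : H₁ →L[ℂ] H₂) (γ : ℝ) (x : H₁) :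
    re ⟪(1 - γ • (adjoint A ∘L A)) x, x⟫_ℂ = ‖x‖ ^ 2 - γ * ‖A x‖ ^ 2 := by
  rw [sub_apply, inner_sub_left, map_sub, one_apply_eq_self, inner_self_eq_norm_sq,
    smul_apply, comp_apply, RCLike.real_smul_eq_coe_smul (K := ℂ), inner_smul_left,
    conj_ofReal, re_ofReal_mul, adjoint_inner_left, inner_self_eq_norm_sq]

theorem isSymmetric_one_sub_smul_adjoint_comp_self (A : H₁ →L[ℂ] H₂) (γ : ℝ) :
    (1 - γ • (adjoint A ∘L A)).IsSymmetric :=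
  (IsSelfAdjoint.one _ |>.sub <|
    (IsSelfAdjoint.all γ).smul A.isPositive_adjoint_comp_self.isSelfAdjoint).isSymmetric

theorem mul_sq_opNorm_le_one_add_norm_one_sub_smul_adjoint_comp_self (A : H₁ →L[ℂ] H₂)
    {γ : ℝ} (hγ : 0 ≤ γ) : γ * ‖A‖ ^ 2 ≤ 1 + ‖1 - γ • (adjoint A ∘L A)‖ :=
  calc γ * ‖A‖ ^ 2 = ‖γ • (adjoint A ∘L A)‖ := by
        rw [norm_smul, norm_adjoint_comp_self, Real.norm_of_nonneg hγ, sq]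
    _ = ‖1 - (1 - γ • (adjoint A ∘L A))‖ := by rw [sub_sub_cancel]
    _ ≤ ‖(1 : H₁ →L[ℂ] H₁)‖ + ‖1 - γ • (adjoint A ∘L A)‖ := norm_sub_le _ _
    _ ≤ 1 + ‖1 - γ • (adjoint A ∘L A)‖ := by gcongr; exact norm_id_le

theorem exists_pos_mul_norm_le_of_norm_one_sub_smul_adjoint_comp_self_lt_one
    (A : H₁ →L[ℂ] H₂) {γ : ℝ} (hγ : 0 < γ) (h : ‖1 - γ • (adjoint A ∘L A)‖ < 1) :
    ∃ μ : ℝ, 0 < μ ∧ ∀ x, μ * ‖x‖ ≤ ‖A x‖ := by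
  refine A.exists_pos_mul_norm_le_of_mul_sq_le (div_pos (sub_pos.2 h) hγ) fun x => ?_
  have hx := (le_abs_self _).trans ((1 - γ • (adjoint A ∘L A)).abs_re_inner_self_le x)
  rw [re_inner_one_sub_smul_adjoint_comp_self_apply] at hx
  rw [div_mul_eq_mul_div, div_le_iff₀ hγ]
  linarith

theorem norm_one_sub_smul_adjoint_comp_self_lt_one (A : H₁ →L[ℂ] H₂) {γ μ : ℝ} (hγ : 0 < γ)
    (hγA : γ * ‖A‖ ^ 2 < 2) (hμ : 0 < μ) (hA : ∀ x, μ * ‖x‖ ≤ ‖A x‖) :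
    ‖1 - γ • (adjoint A ∘L A)‖ < 1 := by
  set k := max (max (1 - γ * μ ^ 2) (γ * ‖A‖ ^ 2 - 1)) 0
  have hk : k < 1 := max_lt (max_lt (by nlinarith [mul_pos hγ (pow_pos hμ 2)]) (by linarith)) one_pos
  refine (opNorm_le_of_abs_re_inner_self_le (A.isSymmetric_one_sub_smul_adjoint_comp_self γ)
    (le_max_right _ _) fun x => ?_).trans_lt hk
  have hlower : μ ^ 2 * ‖x‖ ^ 2 ≤ ‖A x‖ ^ 2 := by
    rw [← mul_pow]; exact pow_le_pow_left₀ (by positivity) (hA x) 2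
  have hupper : ‖A x‖ ^ 2 ≤ ‖A‖ ^ 2 * ‖x‖ ^ 2 := by
    rw [← mul_pow]; exact pow_le_pow_left₀ (norm_nonneg _) (A.le_opNorm x) 2
  have hk₁ : 1 - γ * μ ^ 2 ≤ k := (le_max_left _ _).trans (le_max_left _ _)
  have hk₂ : γ * ‖A‖ ^ 2 - 1 ≤ k := (le_max_right _ _).trans (le_max_left _ _)
  rw [re_inner_one_sub_smul_adjoint_comp_self_apply, abs_le]
  constructor <;> nlinarith [sq_nonneg ‖x‖]

end Complex

end ContinuousLinearMap

theorem landweber_strict_contraction_iff_general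
    {H₁ H₂ : Type*}
    [NormedAddCommGroup H₁] [InnerProductSpace ℂ H₁] [CompleteSpace H₁]
    [NormedAddCommGroup H₂] [InnerProductSpace ℂ H₂] [CompleteSpace H₂]
    (L : H₁ →L[ℂ] H₂) (hL : L ≠ 0) (γ : ℝ) (hγ : 0 < γ) :
    ‖(1 : H₁ →L[ℂ] H₁) - γ • (L.adjoint.comp L)‖ < 1 ↔
      (γ < 2 / ‖L‖ ^ 2 ∧ ∃ μ : ℝ, 0 < μ ∧ ∀ f : H₁, μ * ‖f‖ ≤ ‖L f‖) := by
  have hL₂ : 0 < ‖L‖ ^ 2 := pow_pos (norm_pos_iff.mpr hL) 2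
  rw [lt_div_iff₀ hL₂]
  constructor
  · intro h
    exact ⟨by linarith [L.mul_sq_opNorm_le_one_add_norm_one_sub_smul_adjoint_comp_self hγ.le],
      L.exists_pos_mul_norm_le_of_norm_one_sub_smul_adjoint_comp_self_lt_one hγ h⟩
  · rintro ⟨hγL, μ, hμ, hLμ⟩
    exact L.norm_one_sub_smul_adjoint_comp_self_lt_one hγ hγL hμ hLμ

/-- **Characterization of strict contractivity of `Id − γ L*L`.**
For `H₁` nontrivial, `L ≠ 0` and `γ > 0`, the operator `Id − γ L*L` is a strict
contraction if and only if `γ < 2/‖L‖²` and there is a stability constant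
`μ > 0` with `μ‖f‖ ≤ ‖L f‖` for all `f`. -/
theorem landweber_strict_contraction_iff
    {H₁ H₂ : Type*}
    [NormedAddCommGroup H₁] [InnerProductSpace ℂ H₁] [CompleteSpace H₁]
    [NormedAddCommGroup H₂] [InnerProductSpace ℂ H₂] [CompleteSpace H₂]
    [Nontrivial H₁]
    (L : H₁ →L[ℂ] H₂) (hL : L ≠ 0) (γ : ℝ) (hγ : 0 < γ) :
    ‖(1 : H₁ →L[ℂ] H₁) - γ • (L.adjoint.comp L)‖ < 1 ↔
      (γ < 2 / ‖L‖ ^ 2 ∧ ∃ μ : ℝ, 0 < μ ∧ ∀ f : H₁, μ * ‖f‖ ≤ ‖L f‖) :=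
  landweber_strict_contraction_iff_general L hL γ hγ
end

section
/- If ‖Id − γ L*L‖ < 1, then there exists a unique f* ∈ H₁ solving the normal equation L*L f* = L* m, the Landweber iterates converge to f*, and the convergence is geometric: ‖f⁽ᵏ⁾ − f*‖ ≤ ‖Id − γ L*L‖^k · ‖f*‖ for every k ≥ 0. -/
/-!
The normal operator `A = L*L` is invertible, since `γ A = 1 - (1 - γ A)` is a unit by the
Neumann series; so the normal equation `A f = L* m` has exactly one solution `f*`. The Landweber
iteration is the Richardson iteration `f ↦ f - γ (A f - L* m)` for this equation, whose error
`f⁽ᵏ⁾ - f*` is multiplied by `1 - γ A` at every step; starting from `f⁽⁰⁾ = 0` gives the bound.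
-/

open ContinuousLinearMap Filter

section Richardson

variable {𝕜 E : Type*} [RCLike 𝕜] [NormedAddCommGroup E] [NormedSpace 𝕜 E]
  [NormedSpace ℝ E] [IsScalarTower ℝ 𝕜 E]

theorem ContinuousLinearMap.isUnit_of_norm_one_sub_smul_lt_one [CompleteSpace E]
    {A : E →L[𝕜] E} {γ : ℝ} (h : ‖1 - γ • A‖ < 1) : IsUnit A := by
  have hunit : IsUnit (γ • A) := by simpa using isUnit_one_sub_of_norm_lt_one h
  rw [← smul_one_mul, ((Commute.one_left A).smul_left γ).isUnit_mul_iff] at hunit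
  exact hunit.2

variable {A : E →L[𝕜] E} {γ : ℝ} {x : ℕ → E} {y p : E}

theorem richardson_sub_succ_eq (hx : ∀ k, x (k + 1) = x k - γ • (A (x k) - y)) (hp : A p = y)
    (k : ℕ) : x (k + 1) - p = (1 - γ • A) (x k - p) := by
  rw [hx k, ← hp, sub_apply, smul_apply, one_apply_eq_self, map_sub]
  abel

theorem norm_richardson_sub_le (hx : ∀ k, x (k + 1) = x k - γ • (A (x k) - y)) (hp : A p = y)
    (k : ℕ) : ‖x k - p‖ ≤ ‖1 - γ • A‖ ^ k * ‖x 0 - p‖ := by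
  induction k with
  | zero => simp
  | succ k ih =>
    calc ‖x (k + 1) - p‖ = ‖(1 - γ • A) (x k - p)‖ := by rw [richardson_sub_succ_eq hx hp]
      _ ≤ ‖1 - γ • A‖ * ‖x k - p‖ := le_opNorm _ _
      _ ≤ ‖1 - γ • A‖ * (‖1 - γ • A‖ ^ k * ‖x 0 - p‖) := by gcongr
      _ = ‖1 - γ • A‖ ^ (k + 1) * ‖x 0 - p‖ := by ring

theorem tendsto_richardson (hx : ∀ k, x (k + 1) = x k - γ • (A (x k) - y)) (hp : A p = y)
    (h : ‖1 - γ • A‖ < 1) : Tendsto x atTop (nhds p) := by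
  rw [tendsto_iff_norm_sub_tendsto_zero]
  have hgeom : Tendsto (fun k ↦ ‖1 - γ • A‖ ^ k * ‖x 0 - p‖) atTop (nhds 0) := by
    simpa using (tendsto_pow_atTop_nhds_zero_of_lt_one (norm_nonneg _) h).mul_const ‖x 0 - p‖
  exact squeeze_zero (fun _ ↦ norm_nonneg _) (norm_richardson_sub_le hx hp) hgeom

end Richardson

theorem landweber_geometric_convergence_general
    {H₁ H₂ : Type*}
    [NormedAddCommGroup H₁] [InnerProductSpace ℂ H₁] [CompleteSpace H₁]
    [NormedAddCommGroup H₂] [InnerProductSpace ℂ H₂] [CompleteSpace H₂]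
    (L : H₁ →L[ℂ] H₂) (γ : ℝ) (m : H₂)
    (f : ℕ → H₁) (hf0 : f 0 = 0)
    (hf : ∀ k : ℕ, f (k + 1) = f k - γ • (L.adjoint (L (f k) - m)))
    (hK : ‖(1 : H₁ →L[ℂ] H₁) - γ • (L.adjoint.comp L)‖ < 1) :
    ∃ fstar : H₁,
      L.adjoint (L fstar) = L.adjoint m ∧
      (∀ g : H₁, L.adjoint (L g) = L.adjoint m → g = fstar) ∧
      Tendsto f atTop (nhds fstar) ∧
      ∀ k : ℕ, ‖f k - fstar‖ ≤
        ‖(1 : H₁ →L[ℂ] H₁) - γ • (L.adjoint.comp L)‖ ^ k * ‖fstar‖ := by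
  obtain ⟨fstar, hnormal, huniq⟩ :=
    (isUnit_iff_bijective.1 (isUnit_of_norm_one_sub_smul_lt_one hK)).existsUnique (L.adjoint m)
  have hrichardson : ∀ k, f (k + 1) = f k - γ • ((L.adjoint.comp L) (f k) - L.adjoint m) := by
    intro k
    rw [hf k, map_sub, comp_apply]
  refine ⟨fstar, hnormal, huniq, tendsto_richardson hrichardson hnormal hK, fun k ↦ ?_⟩
  simpa [hf0] using norm_richardson_sub_le hrichardson hnormal k

/-- **Geometric convergence of the Landweber iteration under strict contractivity.**
If `‖Id − γ L*L‖ < 1`, then there is a unique `f*` solving the normal equation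
`L*L f* = L* m`, the Landweber iterates converge to `f*`, and
`‖f⁽ᵏ⁾ − f*‖ ≤ ‖Id − γ L*L‖^k ‖f*‖` for every `k ≥ 0`. -/
theorem landweber_geometric_convergence
    {H₁ H₂ : Type*}
    [NormedAddCommGroup H₁] [InnerProductSpace ℂ H₁] [CompleteSpace H₁]
    [NormedAddCommGroup H₂] [InnerProductSpace ℂ H₂] [CompleteSpace H₂]
    (L : H₁ →L[ℂ] H₂) (γ : ℝ) (hγ : 0 < γ) (m : H₂)
    (f : ℕ → H₁) (hf0 : f 0 = 0)
    (hf : ∀ k : ℕ, f (k + 1) = f k - γ • (L.adjoint (L (f k) - m)))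
    (hK : ‖(1 : H₁ →L[ℂ] H₁) - γ • (L.adjoint.comp L)‖ < 1) :
    ∃ fstar : H₁,
      L.adjoint (L fstar) = L.adjoint m ∧
      (∀ g : H₁, L.adjoint (L g) = L.adjoint m → g = fstar) ∧
      Tendsto f atTop (nhds fstar) ∧
      ∀ k : ℕ, ‖f k - fstar‖ ≤
        ‖(1 : H₁ →L[ℂ] H₁) - γ • (L.adjoint.comp L)‖ ^ k * ‖fstar‖ :=
  landweber_geometric_convergence_general L γ m f hf0 hf hK
end

section
/- Suppose 0 < γ and γ‖L‖² < 2, and suppose the data lies in range(L) ⊕ ker(L*), i.e. m = L f₀ + w with f₀ ∈ H₁ and L* w = 0. Then the Landweber iterates converge strongly to the orthogonal projection of f₀ onto (ker L)ᗮ, which is the minimum-norm solution of the normal equation L*L f = L* m. (In particular, even when inf_{‖f‖=1}‖Lf‖ = 0, the iteration converges for such data.) -/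
open ContinuousLinearMap Filter
open scoped Topology InnerProductSpace

/-! With `T = 1 - γ L*L`, every solution `v` of the normal equation gives
`f⁽ᵏ⁾ - v = Tᵏ (f⁽⁰⁾ - v)`. The energy inequality `‖T x‖² + γ (2 - γ‖L‖²) ‖L x‖² ≤ ‖x‖²` makes `T`
a contraction and `∑ₖ ‖L Tᵏ x‖²` summable, so `Tᵏ (L*L x) = L*L Tᵏ x → 0`. As the powers of `T` are
uniformly bounded, the set where `Tᵏ → 0` is closed, so it contains
`closure (range L*L) = (ker L)ᗮ`. Taking for `v` the projection of `f₀` onto `(ker L)ᗮ` gives the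
convergence; `v` is the minimum-norm solution because all solutions differ by elements of `ker L`.
-/

namespace ContinuousLinearMap

section

variable {𝕜 E F : Type*} [RCLike 𝕜] [NormedAddCommGroup E] [InnerProductSpace 𝕜 E]
  [CompleteSpace E] [NormedAddCommGroup F] [NormedSpace 𝕜 F]

theorem apply_starProjection_orthogonal_ker (L : E →L[𝕜] F) (x : E) :
    L (L.kerᗮ.starProjection x) = L x := by
  have : CompleteSpace L.ker := L.isClosed_ker.completeSpace_coe
  have h_ker := L.kerᗮ.sub_starProjection_mem_orthogonal x
  rw [Submodule.orthogonal_orthogonal, LinearMap.mem_ker, map_sub, sub_eq_zero] at h_ker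
  exact h_ker.symm

end

variable {𝕜 E F : Type*} [RCLike 𝕜]
  [NormedAddCommGroup E] [InnerProductSpace 𝕜 E] [CompleteSpace E]
  [NormedAddCommGroup F] [InnerProductSpace 𝕜 F] [CompleteSpace F]

/-- `γ` acts through `𝕜`: a `𝕜`-inner product space carries no `ℝ`-action in general. -/
noncomputable def landweberOp (L : E →L[𝕜] F) (γ : ℝ) : E →L[𝕜] E :=
  1 - (γ : 𝕜) • (L.adjoint ∘L L)

variable (L : E →L[𝕜] F) {γ : ℝ}

theorem landweberOp_apply (γ : ℝ) (x : E) :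
    L.landweberOp γ x = x - (γ : 𝕜) • L.adjoint (L x) := rfl

theorem commute_landweberOp_adjoint_comp_self (γ : ℝ) :
    Commute (L.landweberOp γ) (L.adjoint ∘L L) :=
  (Commute.one_left _).sub_left ((Commute.refl _).smul_left _)

theorem norm_adjoint_apply_le (y : F) : ‖L.adjoint y‖ ≤ ‖L‖ * ‖y‖ := by
  simpa only [adjoint.norm_map] using L.adjoint.le_opNorm y

theorem norm_landweberOp_apply_sq_add_le (γ : ℝ) (x : E) :
    ‖L.landweberOp γ x‖ ^ 2 + γ * (2 - γ * ‖L‖ ^ 2) * ‖L x‖ ^ 2 ≤ ‖x‖ ^ 2 := by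
  have h_re : RCLike.re ⟪x, (γ : 𝕜) • L.adjoint (L x)⟫_𝕜 = γ * ‖L x‖ ^ 2 := by
    rw [inner_smul_right, adjoint_inner_right, inner_self_eq_norm_sq_to_K, ← RCLike.ofReal_pow,
      ← RCLike.ofReal_mul, RCLike.ofReal_re]
  have h_sq : ‖(γ : 𝕜) • L.adjoint (L x)‖ ^ 2 ≤ γ ^ 2 * (‖L‖ * ‖L x‖) ^ 2 := by
    rw [norm_smul, RCLike.norm_ofReal, mul_pow, sq_abs]
    gcongr
    exact L.norm_adjoint_apply_le _
  rw [landweberOp_apply, @norm_sub_sq 𝕜, h_re]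
  nlinarith

theorem norm_landweberOp_apply_le (hγ : 0 ≤ γ) (hγL : γ * ‖L‖ ^ 2 ≤ 2) (x : E) :
    ‖L.landweberOp γ x‖ ≤ ‖x‖ := by
  have h_energy := L.norm_landweberOp_apply_sq_add_le γ x
  have h_nonneg : 0 ≤ γ * (2 - γ * ‖L‖ ^ 2) * ‖L x‖ ^ 2 := by
    have : 0 ≤ 2 - γ * ‖L‖ ^ 2 := by linarith
    positivity
  exact (sq_le_sq₀ (norm_nonneg _) (norm_nonneg _)).mp (by linarith)

theorem norm_landweberOp_pow_apply_le (hγ : 0 ≤ γ) (hγL : γ * ‖L‖ ^ 2 ≤ 2) (k : ℕ) (x : E) :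
    ‖(L.landweberOp γ ^ k) x‖ ≤ ‖x‖ := by
  induction k with
  | zero => simp
  | succ k ih =>
    rw [pow_succ', mul_apply_eq_comp]
    exact (L.norm_landweberOp_apply_le hγ hγL _).trans ih

theorem equicontinuous_landweberOp_pow (hγ : 0 ≤ γ) (hγL : γ * ‖L‖ ^ 2 ≤ 2) :
    Equicontinuous fun k : ℕ ↦ ⇑(L.landweberOp γ ^ k) := by
  have h_bound : ∃ C, ∀ (k : ℕ) (x : E), ‖(L.landweberOp γ ^ k) x‖ ≤ C * ‖x‖ :=
    ⟨1, by simpa only [one_mul] using L.norm_landweberOp_pow_apply_le hγ hγL⟩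
  exact ((NormedSpace.equicontinuous_TFAE fun k : ℕ ↦ L.landweberOp γ ^ k).out 3 1).mp h_bound

/-- Telescoping the energy inequality along the orbit. -/
theorem summable_norm_apply_landweberOp_pow_sq (hγ : 0 < γ) (hγL : γ * ‖L‖ ^ 2 < 2) (x : E) :
    Summable fun k ↦ ‖L ((L.landweberOp γ ^ k) x)‖ ^ 2 := by
  set c := γ * (2 - γ * ‖L‖ ^ 2)
  have hc : 0 < c := mul_pos hγ (by linarith)
  refine summable_of_sum_range_le (c := ‖x‖ ^ 2 / c) (fun _ ↦ sq_nonneg _) fun n ↦ ?_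
  rw [le_div_iff₀ hc, Finset.sum_mul]
  calc ∑ k ∈ Finset.range n, ‖L ((L.landweberOp γ ^ k) x)‖ ^ 2 * c
      ≤ ∑ k ∈ Finset.range n,
          (‖(L.landweberOp γ ^ k) x‖ ^ 2 - ‖(L.landweberOp γ ^ (k + 1)) x‖ ^ 2) := by
        refine Finset.sum_le_sum fun k _ ↦ ?_
        have h_energy := L.norm_landweberOp_apply_sq_add_le γ ((L.landweberOp γ ^ k) x)
        rw [pow_succ' (L.landweberOp γ), mul_apply_eq_comp]
        linarith
    _ = ‖x‖ ^ 2 - ‖(L.landweberOp γ ^ n) x‖ ^ 2 := by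
        rw [Finset.sum_range_sub' (fun k ↦ ‖(L.landweberOp γ ^ k) x‖ ^ 2), pow_zero,
          one_apply_eq_self]
    _ ≤ ‖x‖ ^ 2 := sub_le_self _ (sq_nonneg _)

theorem tendsto_landweberOp_pow_apply_adjoint_comp_self (hγ : 0 < γ) (hγL : γ * ‖L‖ ^ 2 < 2)
    (x : E) : Tendsto (fun k ↦ (L.landweberOp γ ^ k) (L.adjoint (L x))) atTop (𝓝 0) := by
  have h_norm : Tendsto (fun k ↦ ‖L ((L.landweberOp γ ^ k) x)‖) atTop (𝓝 0) := by
    have h_sq := (L.summable_norm_apply_landweberOp_pow_sq hγ hγL x).tendsto_atTop_zero.sqrt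
    simpa only [Real.sqrt_sq (norm_nonneg _), Real.sqrt_zero] using h_sq
  refine squeeze_zero_norm (fun k ↦ ?_) (by simpa only [mul_zero] using h_norm.const_mul ‖L‖)
  have h_comm := ((L.commute_landweberOp_adjoint_comp_self γ).pow_left k).eq
  rw [← comp_apply L.adjoint L, ← mul_apply_eq_comp, h_comm, mul_apply_eq_comp, comp_apply]
  exact L.norm_adjoint_apply_le _

theorem tendsto_landweberOp_pow_apply_of_mem_orthogonal_ker (hγ : 0 < γ)
    (hγL : γ * ‖L‖ ^ 2 < 2) {x : E} (hx : x ∈ L.kerᗮ) :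
    Tendsto (fun k ↦ (L.landweberOp γ ^ k) x) atTop (𝓝 0) := by
  have h_closed : IsClosed {y : E | Tendsto (fun k ↦ (L.landweberOp γ ^ k) y) atTop (𝓝 0)} :=
    (L.equicontinuous_landweberOp_pow hγ.le hγL.le).isClosed_setOfPred_tendsto continuous_const
  have h_range : ((L.adjoint ∘L L).range : Set E) ⊆
      {y : E | Tendsto (fun k ↦ (L.landweberOp γ ^ k) y) atTop (𝓝 0)} := by
    rintro _ ⟨y, rfl⟩
    exact L.tendsto_landweberOp_pow_apply_adjoint_comp_self hγ hγL y
  have h_dense : L.kerᗮ = (L.adjoint ∘L L).range.topologicalClosure := by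
    rw [← L.ker_adjoint_comp_self, orthogonal_ker, adjoint_comp, adjoint_adjoint]
  rw [h_dense] at hx
  exact closure_minimal h_range h_closed hx

theorem landweber_sub_eq_landweberOp_pow_apply {m : F} {f : ℕ → E}
    (hf : ∀ k, f (k + 1) = f k - (γ : 𝕜) • L.adjoint (L (f k) - m)) {v : E}
    (hv : L.adjoint (L v) = L.adjoint m) (k : ℕ) :
    f k - v = (L.landweberOp γ ^ k) (f 0 - v) := by
  induction k with
  | zero => simp
  | succ k ih =>
    rw [pow_succ', mul_apply_eq_comp, ← ih, landweberOp_apply, hf, map_sub, map_sub, map_sub, hv]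
    abel

theorem starProjection_orthogonal_ker_eq_of_adjoint_apply_eq {x g : E}
    (h : L.adjoint (L g) = L.adjoint (L x)) :
    L.kerᗮ.starProjection g = L.kerᗮ.starProjection x := by
  have h_ker : g - x ∈ L.ker := by
    rw [← L.ker_adjoint_comp_self, LinearMap.mem_ker, coe_coe, map_sub, comp_apply, comp_apply, h,
      sub_self]
  rw [← sub_eq_zero, ← map_sub]
  exact Submodule.starProjection_orthogonal_apply_eq_zero h_ker

theorem tendsto_landweber_starProjection (hγ : 0 < γ) (hγL : γ * ‖L‖ ^ 2 < 2) {m : F}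
    {f : ℕ → E} (hf0 : f 0 = 0) (hf : ∀ k, f (k + 1) = f k - (γ : 𝕜) • L.adjoint (L (f k) - m))
    {x : E} (hx : L.adjoint (L x) = L.adjoint m) :
    Tendsto f atTop (𝓝 (L.kerᗮ.starProjection x)) := by
  set v := L.kerᗮ.starProjection x
  have hv : L.adjoint (L v) = L.adjoint m := by rw [apply_starProjection_orthogonal_ker, hx]
  have h_err := L.tendsto_landweberOp_pow_apply_of_mem_orthogonal_ker hγ hγL
    (L.kerᗮ.neg_mem (L.kerᗮ.starProjection_apply_mem x))
  rw [← tendsto_sub_nhds_zero_iff]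
  simpa only [L.landweber_sub_eq_landweberOp_pow_apply hf hv, hf0, zero_sub] using h_err

end ContinuousLinearMap

/-- **Convergence of the Landweber iteration for data in `range(L) ⊕ ker(L*)`.**
If `0 < γ`, `γ‖L‖² < 2` and `m = L f₀ + w` with `L* w = 0`, then the Landweber
iterates converge strongly to the orthogonal projection of `f₀` onto `(ker L)ᗮ`,
which is the minimum-norm solution of the normal equation `L*L f = L* m`. -/
theorem landweber_convergence_data_in_range_plus_kernel
    {H₁ H₂ : Type*}
    [NormedAddCommGroup H₁] [InnerProductSpace ℂ H₁] [CompleteSpace H₁]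
    [NormedAddCommGroup H₂] [InnerProductSpace ℂ H₂] [CompleteSpace H₂]
    (L : H₁ →L[ℂ] H₂) (γ : ℝ) (hγ : 0 < γ) (hγ2 : γ * ‖L‖ ^ 2 < 2) (m : H₂)
    (f : ℕ → H₁) (hf0 : f 0 = 0)
    (hf : ∀ k : ℕ, f (k + 1) = f k - γ • (L.adjoint (L (f k) - m)))
    (f₀ : H₁) (w : H₂) (hm : m = L f₀ + w) (hw : L.adjoint w = 0) :
    Tendsto f atTop (nhds ((Submodule.orthogonalProjection (LinearMap.ker (L : H₁ →ₗ[ℂ] H₂))ᗮ f₀ : H₁))) ∧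
    L.adjoint (L ((Submodule.orthogonalProjection (LinearMap.ker (L : H₁ →ₗ[ℂ] H₂))ᗮ f₀ : H₁))) = L.adjoint m ∧
    ∀ g : H₁, L.adjoint (L g) = L.adjoint m →
      ‖((Submodule.orthogonalProjection (LinearMap.ker (L : H₁ →ₗ[ℂ] H₂))ᗮ f₀ : H₁))‖ ≤ ‖g‖ := by
  simp only [Submodule.coe_orthogonalProjectionOnto_apply]
  have h_normal : L.adjoint (L f₀) = L.adjoint m := by rw [hm, map_add, hw, add_zero]
  have hf' : ∀ k, f (k + 1) = f k - (γ : ℂ) • L.adjoint (L (f k) - m) := fun k ↦ by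
    rw [hf k, Complex.coe_smul]
  refine ⟨L.tendsto_landweber_starProjection hγ hγ2 hf0 hf' h_normal, ?_, fun g hg ↦ ?_⟩
  · rw [L.apply_starProjection_orthogonal_ker, h_normal]
  · rw [← L.starProjection_orthogonal_ker_eq_of_adjoint_apply_eq (hg.trans h_normal.symm)]
    exact Submodule.norm_starProjection_apply_le _ g
end

section
/- (Unitary case.) If F is unitary, i.e. F*F = Id on H₁ and F F* = Id on H₂, then for any (f₁, f₂) ∈ H₁ × H₂ the unique minimum-norm element of the affine set {(f₁ + h, f₂ − F h) : h ∈ H₁} equals (½(f₁ + F* f₂), ½(f₂ + F f₁)); i.e. the reconstruction keeps half of each original and transforms the other half into the mirror-image artifact. -/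
/-!
A pair `(a, b)` with `F* b = a` is orthogonal to the graph `{(u, -F u)}`, since
`⟪(a, b), (u, -F u)⟫ = ⟪a, u⟫ - ⟪F* b, u⟫ = 0`; by Pythagoras it is therefore the unique
minimum-norm point of its coset, `‖(a + u, b - F u)‖² = ‖(a, b)‖² + ‖u‖² + ‖F u‖²`.
For unitary `F` the proposed centre `(a, b) = (½(f₁ + F* f₂), ½(f₂ + F f₁))` satisfies
`F* b = a` (by `F* F = 1`) and lies on the coset of `(f₁, f₂)`, being
`(f₁ + h₀, f₂ - F h₀)` with `h₀ = ½(F* f₂ - f₁)` (by `F F* = 1`).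
-/

open ContinuousLinearMap

/-- The element `(x, y)` of the Hilbert space `H₁ ×₂ H₂` (the product with the
inner product `⟨(u₁,u₂),(v₁,v₂)⟩ = ⟨u₁,v₁⟩ + ⟨u₂,v₂⟩`). -/
noncomputable def pairL2 {H₁ H₂ : Type*} (x : H₁) (y : H₂) : WithLp 2 (H₁ × H₂) :=
  (WithLp.equiv 2 (H₁ × H₂)).symm (x, y)

lemma pairL2_norm_sq {H₁ H₂ : Type*} [SeminormedAddCommGroup H₁] [SeminormedAddCommGroup H₂]
    (x : H₁) (y : H₂) : ‖pairL2 x y‖ ^ 2 = ‖x‖ ^ 2 + ‖y‖ ^ 2 :=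
  WithLp.prod_norm_sq_eq_of_L2 _

section GraphCoset

variable {𝕜 E F : Type*} [RCLike 𝕜]
  [NormedAddCommGroup E] [InnerProductSpace 𝕜 E] [CompleteSpace E]
  [NormedAddCommGroup F] [InnerProductSpace 𝕜 F] [CompleteSpace F]
  (T : E →L[𝕜] F) {a : E} {b : F}

lemma norm_pairL2_add_sub_sq_of_adjoint_eq (hab : T.adjoint b = a) (u : E) :
    ‖pairL2 (a + u) (b - T u)‖ ^ 2 = ‖pairL2 a b‖ ^ 2 + (‖u‖ ^ 2 + ‖T u‖ ^ 2) := by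
  have hcross : RCLike.re (inner 𝕜 b (T u)) = RCLike.re (inner 𝕜 a u) := by
    rw [← adjoint_inner_left, hab]
  rw [pairL2_norm_sq, pairL2_norm_sq, norm_add_sq (𝕜 := 𝕜), norm_sub_sq (𝕜 := 𝕜), hcross]
  ring

lemma norm_pairL2_le_of_adjoint_eq (hab : T.adjoint b = a) (u : E) :
    ‖pairL2 a b‖ ≤ ‖pairL2 (a + u) (b - T u)‖ := by
  refine le_of_sq_le_sq ?_ (norm_nonneg _)
  rw [norm_pairL2_add_sub_sq_of_adjoint_eq T hab]
  exact le_add_of_nonneg_right (by positivity)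

lemma eq_zero_of_norm_pairL2_eq_of_adjoint_eq (hab : T.adjoint b = a) {u : E}
    (heq : ‖pairL2 (a + u) (b - T u)‖ = ‖pairL2 a b‖) : u = 0 := by
  have hsq := norm_pairL2_add_sub_sq_of_adjoint_eq T hab u
  rw [heq] at hsq
  have hu : ‖u‖ ^ 2 = 0 := by nlinarith [sq_nonneg ‖u‖, sq_nonneg ‖T u‖]
  simpa using hu

end GraphCoset

/-- **Unitary case: half of the original and half mirror-image artifact.**
If `F` is unitary (`F*F = Id`, `F F* = Id`), then the unique minimum-norm
element of the affine set `{(f₁ + h, f₂ − F h) : h ∈ H₁}` equals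
`(½(f₁ + F* f₂), ½(f₂ + F f₁))`. -/
theorem minimum_norm_solution_unitary_case
    {H₁ H₂ : Type*}
    [NormedAddCommGroup H₁] [InnerProductSpace ℂ H₁] [CompleteSpace H₁]
    [NormedAddCommGroup H₂] [InnerProductSpace ℂ H₂] [CompleteSpace H₂]
    (F : H₁ →L[ℂ] H₂)
    (hFF : F.adjoint.comp F = (1 : H₁ →L[ℂ] H₁))
    (hFF' : F.comp F.adjoint = (1 : H₂ →L[ℂ] H₂))
    (f₁ : H₁) (f₂ : H₂) :
    (∃ h : H₁,
      pairL2 ((2 : ℂ)⁻¹ • (f₁ + F.adjoint f₂)) ((2 : ℂ)⁻¹ • (f₂ + F f₁)) =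
        pairL2 (f₁ + h) (f₂ - F h)) ∧
    (∀ h : H₁,
      ‖pairL2 ((2 : ℂ)⁻¹ • (f₁ + F.adjoint f₂)) ((2 : ℂ)⁻¹ • (f₂ + F f₁))‖ ≤
        ‖pairL2 (f₁ + h) (f₂ - F h)‖) ∧
    (∀ h : H₁,
      ‖pairL2 (f₁ + h) (f₂ - F h)‖ =
        ‖pairL2 ((2 : ℂ)⁻¹ • (f₁ + F.adjoint f₂)) ((2 : ℂ)⁻¹ • (f₂ + F f₁))‖ →
      pairL2 (f₁ + h) (f₂ - F h) =
        pairL2 ((2 : ℂ)⁻¹ • (f₁ + F.adjoint f₂)) ((2 : ℂ)⁻¹ • (f₂ + F f₁))) := by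
  have hFF_apply (x : H₁) : F.adjoint (F x) = x := congr($hFF x)
  have hFF'_apply (y : H₂) : F (F.adjoint y) = y := congr($hFF' y)
  set a := (2 : ℂ)⁻¹ • (f₁ + F.adjoint f₂)
  set b := (2 : ℂ)⁻¹ • (f₂ + F f₁)
  set h₀ := (2 : ℂ)⁻¹ • (F.adjoint f₂ - f₁)
  have hadj : F.adjoint b = a := by
    simp only [b, a, map_smul, map_add, hFF_apply, add_comm]
  have ha : f₁ + h₀ = a := by module
  have hb : f₂ - F h₀ = b := by
    simp only [h₀, map_smul, map_sub, hFF'_apply]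
    module
  have hshift (h : H₁) : pairL2 (f₁ + h) (f₂ - F h) = pairL2 (a + (h - h₀)) (b - F (h - h₀)) := by
    rw [← ha, ← hb, map_sub]
    congr 1 <;> abel
  refine ⟨⟨h₀, by rw [ha, hb]⟩, fun h => ?_, fun h heq => ?_⟩
  · rw [hshift]
    exact norm_pairL2_le_of_adjoint_eq F hadj _
  · rw [hshift] at heq ⊢
    rw [eq_zero_of_norm_pairL2_eq_of_adjoint_eq F hadj heq, add_zero, map_zero, sub_zero]
end

section
/- (Positive attenuation makes the microlocal system solvable.) If t₁ < t₂ and the attenuation is positive between the conjugate points, i.e. a(s) > 0 for all s ∈ [t₁, t₂], then det Q < 0; in particular Q is invertible and the pair of singularities at the conjugate points can be resolved from the data in the two orientations. -/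
open intervalIntegral

/-!
The two products of weights along the diagonals of `Q` integrate `a` over the same intervals,
except that `exp (-∫ₜ₁ᵀ a - ∫₀ᵗ² a)` counts `[t₁, t₂]` twice and `exp (-∫ₜ₂ᵀ a - ∫₀ᵗ¹ a)` not at
all. Hence `det Q` is the difference of two exponentials whose exponents differ by
`-2 ∫ₜ₁ᵗ² a < 0`.
-/

theorem Matrix.det_fin_two_exp_neg_lt_zero_iff (p q r s : ℝ) :
    (!![Real.exp (-p), Real.exp (-q); Real.exp (-r), Real.exp (-s)]).det < 0 ↔ q + r < p + s := by
  rw [Matrix.det_fin_two_of, ← Real.exp_add, ← Real.exp_add, sub_neg, Real.exp_lt_exp]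
  constructor <;> intro h <;> linarith

theorem intervalIntegral.integral_add_integral_sub_add_eq_two_mul {f : ℝ → ℝ} {u x y T : ℝ}
    (hux : IntervalIntegrable f MeasureTheory.volume u x)
    (hxy : IntervalIntegrable f MeasureTheory.volume x y)
    (hyT : IntervalIntegrable f MeasureTheory.volume y T) :
    ((∫ s in x..T, f s) + ∫ s in u..y, f s) - ((∫ s in y..T, f s) + ∫ s in u..x, f s) =
      2 * ∫ s in x..y, f s := by
  rw [← integral_add_adjacent_intervals hxy hyT, ← integral_add_adjacent_intervals hux hxy]
  ring

theorem positive_attenuation_detQ_neg_general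
    (a : ℝ → ℝ) (ha : Continuous a)
    (T t₁ t₂ : ℝ) (h12 : t₁ < t₂)
    (hpos : ∀ s ∈ Set.Icc t₁ t₂, 0 < a s) :
    (!![Real.exp (-∫ s in t₁..T, a s), Real.exp (-∫ s in t₂..T, a s);
        Real.exp (-∫ s in (0 : ℝ)..t₁, a s),
        Real.exp (-∫ s in (0 : ℝ)..t₂, a s)] : Matrix (Fin 2) (Fin 2) ℝ).det < 0 ∧
    IsUnit
      (!![Real.exp (-∫ s in t₁..T, a s), Real.exp (-∫ s in t₂..T, a s);
          Real.exp (-∫ s in (0 : ℝ)..t₁, a s),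
          Real.exp (-∫ s in (0 : ℝ)..t₂, a s)] : Matrix (Fin 2) (Fin 2) ℝ) := by
  have hint : ∀ u v : ℝ, IntervalIntegrable a MeasureTheory.volume u v :=
    ha.intervalIntegrable
  have hmid : 0 < ∫ s in t₁..t₂, a s :=
    intervalIntegral_pos_of_pos_on (hint t₁ t₂) (fun s hs => hpos s (Set.Ioo_subset_Icc_self hs))
      h12
  have hsplit := integral_add_integral_sub_add_eq_two_mul (hint 0 t₁) (hint t₁ t₂) (hint t₂ T)
  have hdet : Matrix.det !![Real.exp (-∫ s in t₁..T, a s), Real.exp (-∫ s in t₂..T, a s);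
      Real.exp (-∫ s in (0 : ℝ)..t₁, a s), Real.exp (-∫ s in (0 : ℝ)..t₂, a s)] < 0 :=
    (Matrix.det_fin_two_exp_neg_lt_zero_iff _ _ _ _).2 (by linarith)
  exact ⟨hdet, (Matrix.isUnit_iff_isUnit_det _).2 hdet.ne.isUnit⟩

/-- **Positive attenuation makes the microlocal system solvable.**
If `t₁ < t₂` and the attenuation is positive between the conjugate points,
`a > 0` on `[t₁, t₂]`, then `det Q < 0`; in particular the matrix `Q` of
microlocal weights is invertible. -/
theorem positive_attenuation_detQ_neg
    (a : ℝ → ℝ) (ha : Continuous a)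
    (T t₁ t₂ : ℝ) (h0 : 0 ≤ t₁) (h12 : t₁ < t₂) (h2T : t₂ ≤ T)
    (hpos : ∀ s ∈ Set.Icc t₁ t₂, 0 < a s) :
    (!![Real.exp (-∫ s in t₁..T, a s), Real.exp (-∫ s in t₂..T, a s);
        Real.exp (-∫ s in (0 : ℝ)..t₁, a s),
        Real.exp (-∫ s in (0 : ℝ)..t₂, a s)] : Matrix (Fin 2) (Fin 2) ℝ).det < 0 ∧
    IsUnit
      (!![Real.exp (-∫ s in t₁..T, a s), Real.exp (-∫ s in t₂..T, a s);
          Real.exp (-∫ s in (0 : ℝ)..t₁, a s),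
          Real.exp (-∫ s in (0 : ℝ)..t₂, a s)] : Matrix (Fin 2) (Fin 2) ℝ) :=
  positive_attenuation_detQ_neg_general a ha T t₁ t₂ h12 hpos
end
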